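/- Let p be an odd prime, let n ≥ 2 be an integer, and let G be a finite p-group of nilpotency class two with G' = Z(G) = Frat(G) (the Frattini subgroup), generated by elements x₁, …, x_n, such that G/G' is elementary abelian of order p^n with the images of x₁, …, x_n as an F_p-basis, and G' is elementary abelian of order p^{n(n−1)/2} with the commutators [x_j, x_k] (1 ≤ j < k ≤ n) as an F_p-basis. Let π: G/G' → G' be the homomorphism induced by x ↦ x^p. Let σ be an endomorphism of G' such that τ: z ↦ z·σ(z)² is an automorphism of G', and let ∘ be the operation x ∘ y = x·y·σ([x, y]). Let α be an automorphism of G/G' and suppose α̂ is an automorphism of G' satisfying α̂([x, y]) = [u, v] for all x, y, u, v ∈ G with uG' = α(xG') and vG' = α(yG'). Then the following are equivalent: (1) there exists a bijection θ: G → G with θ(x·y) = θ(x) ∘ θ(y) for all x, y ∈ G and θ(x)G' = α(xG') for all x ∈ G; (2) α̂(π(α⁻¹(w))) = τ⁻¹(π(w)) for all w ∈ G/G'. Moreover, in this case any such θ satisfies θ(z) = τ(α̂(z)) for all z ∈ G'. -/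

import Mathlib

/-- The commutator `[x, y] = x⁻¹ * y⁻¹ * x * y` in the paper's convention. -/
def pcomm {G : Type*} [Group G] (x y : G) : G := x⁻¹ * y⁻¹ * x * y

open scoped commutatorElement in
theorem pcomm_mem_commutator {G : Type*} [Group G] (x y : G) :
    pcomm x y ∈ commutator G := by
  have h : pcomm x y = ⁅x⁻¹, y⁻¹⁆ := by
    simp [pcomm, commutatorElement_def, mul_assoc]
  rw [h, commutator_def]
  exact Subgroup.commutator_mem_commutator (Subgroup.mem_top _) (Subgroup.mem_top _)

/-- A bilinear form on a group `G` of class two with `G' = Z(G)`: a map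
`Δ : G/G' × G/G' → G'` which is multiplicative in each variable. -/
def IsBilinearForm {G : Type*} [Group G] (Δ : G → G → G) : Prop :=
  (∀ x y : G, Δ x y ∈ commutator G) ∧
  (∀ x y w : G, w ∈ commutator G → Δ (x * w) y = Δ x y) ∧
  (∀ x y w : G, w ∈ commutator G → Δ x (y * w) = Δ x y) ∧
  (∀ x₁ x₂ y : G, Δ (x₁ * x₂) y = Δ x₁ y * Δ x₂ y) ∧
  (∀ x y₁ y₂ : G, Δ x (y₁ * y₂) = Δ x y₁ * Δ x y₂)

/-- The circle operation `x ∘ y = x·y·Δ(x, y)` associated to a bilinear form `Δ`. -/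
def circ {G : Type*} [Group G] (Δ : G → G → G) (x y : G) : G := x * y * Δ x y

/-- The circle inverse `x^{⊖1} = x⁻¹·Δ(x, x)`. -/
def oinv {G : Type*} [Group G] (Δ : G → G → G) (x : G) : G := x⁻¹ * Δ x x

/-- The circle commutator `[x, y]_∘ = x^{⊖1} ∘ y^{⊖1} ∘ x ∘ y`. -/
def ocomm {G : Type*} [Group G] (Δ : G → G → G) (x y : G) : G :=
  circ Δ (circ Δ (circ Δ (oinv Δ x) (oinv Δ y)) x) y

/-- The anti-symmetric bilinear form `Δ_σ(x, y) = σ([x, y])` associated to an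
endomorphism `σ` of `G'`. -/
def deltaSigma {G : Type*} [Group G] (σ : ↥(commutator G) →* ↥(commutator G))
    (x y : G) : G :=
  ↑(σ ⟨pcomm x y, pcomm_mem_commutator x y⟩)

/-!
`(G, ∘)` is a group `H` in which commutators and `p`-th powers are `[x, y]_∘ = τ([x, y])` and
`x^{∘p} = x^p`. A bijection `θ` as in (1) is an isomorphism `G → H` inducing `α` on `G/G'`, so it
sends `[a, b]` to `τ(α̂[a, b])`, hence acts on `G' = ⟨[a, b]⟩` as `τ ∘ α̂`; evaluating
`θ(g^p) = θ(g)^p` in two ways gives (2).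

Conversely, assume (2) and lift each `α(xᵢG')` to some `yᵢ`. In `G × H` let `D` be the central
subgroup of pairs `(z, τ(α̂ z))`, `z ∈ G'`, and `K = ⟨(xᵢ, yᵢ)⟩ · D`. By the choice of `α̂` and by
(2), commutators and `p`-th powers of the `(xᵢ, yᵢ)` lie in `D`, so `K/D` is abelian of exponent
`p` on `n` generators. It has at most `p^n = |G/G'|` elements and maps onto `G/G'`, hence
injectively; so `K` meets `1 × H` trivially and is the graph of the required `θ`.
-/

open Subgroup

section Pcomm
variable {G : Type*} [Group G]

lemma pcomm_inv (a b : G) : (pcomm a b)⁻¹ = pcomm b a := by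
  simp [pcomm, mul_assoc]

lemma Commute.pcomm_eq_one {a b : G} (h : Commute a b) : pcomm a b = 1 := by
  rw [pcomm, mul_assoc, h.eq]
  group

lemma pcomm_eq_of_mul_eq {a b c : G} (h : a * b = b * a * c) : pcomm a b = c := by
  rw [pcomm, mul_assoc _ a b, h]
  group

lemma map_pcomm {H : Type*} [Group H] (f : G →* H) (a b : G) :
    f (pcomm a b) = pcomm (f a) (f b) := by
  simp [pcomm]

variable (hZ : commutator G ≤ center G)
include hZ

lemma pcomm_mem_center (a b : G) : pcomm a b ∈ center G :=
  hZ (pcomm_mem_commutator a b)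

lemma pcomm_mul_left (a b c : G) : pcomm (a * b) c = pcomm a c * pcomm b c := by
  have h : pcomm (a * b) c = b⁻¹ * (pcomm a c * b) * pcomm b c := by
    simp only [pcomm]; group
  rw [h, ← (mem_center_iff.mp (pcomm_mem_center hZ a c) b)]
  group

lemma pcomm_mul_right (a b c : G) : pcomm a (b * c) = pcomm a b * pcomm a c := by
  rw [← pcomm_inv, pcomm_mul_left hZ, mul_inv_rev, pcomm_inv, pcomm_inv,
    (mem_center_iff.mp (pcomm_mem_center hZ a c) _)]

end Pcomm

theorem Subgroup.card_closure_range_le_of_pow_eq_one {G ι : Type*} [Group G] [Finite G]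
    [Fintype ι] {p : ℕ} (hp : p ≠ 0) {g : ι → G} (hcomm : Pairwise fun i j ↦ Commute (g i) (g j))
    (hpow : ∀ i, g i ^ p = 1) :
    Nat.card (closure (Set.range g)) ≤ p ^ Fintype.card ι := by
  have hc : Pairwise fun i j ↦ ∀ a b, a ∈ zpowers (g i) → b ∈ zpowers (g j) → Commute a b := by
    rintro i j hij _ _ ⟨k, rfl⟩ ⟨l, rfl⟩
    exact (hcomm hij).zpow_zpow k l
  have hle : closure (Set.range g) ≤ (noncommPiCoprod hc).range := by
    rw [noncommPiCoprod_range, closure_le]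
    rintro _ ⟨i, rfl⟩
    exact mem_iSup_of_mem i (mem_zpowers _)
  calc Nat.card (closure (Set.range g)) ≤ Nat.card (noncommPiCoprod hc).range := card_le_of_le hle
    _ ≤ Nat.card (∀ i, zpowers (g i)) :=
        Nat.card_le_card_of_surjective _ (MonoidHom.rangeRestrict_surjective _)
    _ = ∏ i, orderOf (g i) := by simp only [Nat.card_pi, Nat.card_zpowers]
    _ ≤ ∏ _i : ι, p := Finset.prod_le_prod' fun i _ ↦ orderOf_le_of_pow_eq_one hp.bot_lt (hpow i)
    _ = p ^ Fintype.card ι := by rw [Finset.prod_const, Finset.card_univ]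

theorem QuotientGroup.commute_mk_of_pcomm_mem {G : Type*} [Group G] {N : Subgroup G} [N.Normal]
    {a b : G} (h : pcomm a b ∈ N) : Commute (a : G ⧸ N) (b : G ⧸ N) := by
  rw [Commute, SemiconjBy, ← QuotientGroup.mk_mul, ← QuotientGroup.mk_mul, eq_comm,
    QuotientGroup.eq]
  simpa [pcomm, mul_assoc] using h

theorem mem_of_mem_closure_sup_of_map_eq_one {P Q ι : Type*} [Group P] [Finite P] [Group Q]
    [Fintype ι] {p : ℕ} (hp : p ≠ 0) {D : Subgroup P} [D.Normal] {u : ι → P}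
    (hcomm : ∀ i j, pcomm (u i) (u j) ∈ D) (hpow : ∀ i, u i ^ p ∈ D)
    {χ : P →* Q} (hD : D ≤ χ.ker) (hχ : closure (Set.range (χ ∘ u)) = ⊤)
    (hQ : Nat.card Q = p ^ Fintype.card ι) {k : P} (hk : k ∈ closure (Set.range u) ⊔ D)
    (hχk : χ k = 1) : k ∈ D := by
  set χ' := QuotientGroup.lift D χ hD
  set L := closure (Set.range fun i ↦ (u i : P ⧸ D))
  have hkL : (k : P ⧸ D) ∈ L := by
    refine (sup_le ?_ fun d hd ↦ ?_ : closure (Set.range u) ⊔ D ≤ L.comap (QuotientGroup.mk' D)) hk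
    · exact (closure_le _).mpr (by rintro _ ⟨i, rfl⟩; exact subset_closure ⟨i, rfl⟩)
    · simp [(QuotientGroup.eq_one_iff d).mpr hd, one_mem]
  have hsurj : Function.Surjective (χ'.domRestrict L) := by
    rw [← MonoidHom.range_eq_top, MonoidHom.domRestrict_range, MonoidHom.map_closure,
      ← Set.range_comp]
    exact hχ
  have hcard : Nat.card L ≤ Nat.card Q := hQ ▸ Subgroup.card_closure_range_le_of_pow_eq_one hp
    (fun i j _ ↦ QuotientGroup.commute_mk_of_pcomm_mem (hcomm i j))
    (fun i ↦ by rw [← QuotientGroup.mk_pow, QuotientGroup.eq_one_iff]; exact hpow i)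
  have hk1 : (⟨k, hkL⟩ : L) = 1 :=
    (hsurj.bijective_of_nat_card_le hcard).1 (by simpa [χ'] using hχk)
  exact (QuotientGroup.eq_one_iff k).mp (congrArg Subtype.val hk1)

theorem Subgroup.normal_of_le_center {G : Type*} [Group G] {N : Subgroup G}
    (hN : N ≤ center G) : N.Normal :=
  ⟨fun n hn g ↦ by rwa [mem_center_iff.mp (hN hn) g, mul_inv_cancel_right]⟩

section CentralExtension
variable {G H ι : Type*} [Group G] [Finite G] [Group H] [Finite H] [Fintype ι] {p : ℕ}
  {N : Subgroup G} [N.Normal] {x : ι → G} {y : ι → H} {ψ : N →* H}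
  (hp : p ≠ 0) (hN : N ≤ center G) (hψ : ∀ z, ψ z ∈ center H)
  (hx : closure (Set.range x) = ⊤) (hcard : Nat.card (G ⧸ N) = p ^ Fintype.card ι)
  (hcomm : ∀ i j, ∃ z : N, (z : G) = pcomm (x i) (x j) ∧ ψ z = pcomm (y i) (y j))
  (hpow : ∀ i, ∃ z : N, (z : G) = x i ^ p ∧ ψ z = y i ^ p)
include hp hN hψ hx hcard hcomm hpow

theorem snd_eq_one_of_mem_closure_sup_range_prod {k : G × H}
    (hk : k ∈ closure (Set.range fun i ↦ (x i, y i)) ⊔ (N.subtype.prod ψ).range)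
    (hk₁ : k.1 = 1) : k.2 = 1 := by
  set D := (N.subtype.prod ψ).range
  have : D.Normal := normal_of_le_center <| by
    rintro _ ⟨z, rfl⟩
    exact mem_center_iff.mpr fun g ↦
      Prod.ext (mem_center_iff.mp (hN z.2) g.1) (mem_center_iff.mp (hψ z) g.2)
  set χ := (QuotientGroup.mk' N).comp (MonoidHom.fst G H)
  have hDχ : D ≤ χ.ker := by
    rintro _ ⟨z, rfl⟩
    simp [χ]
  have hχ : closure (Set.range (χ ∘ fun i ↦ (x i, y i))) = ⊤ := by
    rw [show χ ∘ (fun i ↦ (x i, y i)) = QuotientGroup.mk' N ∘ x from rfl, Set.range_comp,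
      ← MonoidHom.map_closure, hx, map_top_of_surjective _ (QuotientGroup.mk'_surjective N)]
  have hcommD : ∀ i j, pcomm (x i, y i) (x j, y j) ∈ D := fun i j ↦ by
    obtain ⟨z, hz, hψz⟩ := hcomm i j
    exact ⟨z, Prod.ext hz hψz⟩
  have hpowD : ∀ i, (x i, y i) ^ p ∈ D := fun i ↦ by
    obtain ⟨z, hz, hψz⟩ := hpow i
    exact ⟨z, Prod.ext hz hψz⟩
  obtain ⟨z, rfl⟩ := mem_of_mem_closure_sup_of_map_eq_one hp hcommD hpowD hDχ hχ hcard hk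
    (by simp [χ, hk₁])
  obtain rfl : z = 1 := Subtype.ext hk₁
  exact map_one ψ

theorem exists_monoidHom_extend : ∃ f : G →* H, (∀ i, f (x i) = y i) ∧ ∀ z : N, f z = ψ z := by
  set K := closure (Set.range fun i ↦ (x i, y i)) ⊔ (N.subtype.prod ψ).range
  have hxK : ∀ i, (x i, y i) ∈ K := fun i ↦ mem_sup_left (subset_closure ⟨i, rfl⟩)
  have hψK : ∀ z : N, ((z : G), ψ z) ∈ K := fun z ↦ mem_sup_right ⟨z, rfl⟩
  have hfst : K.map (MonoidHom.fst G H) = ⊤ :=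
    eq_top_iff.mpr <| hx ▸ (closure_le _).mpr (by rintro _ ⟨i, rfl⟩; exact ⟨_, hxK i, rfl⟩)
  have hbij : Function.Bijective (Prod.fst ∘ K.subtype) := by
    refine ⟨(injective_iff_map_eq_one ((MonoidHom.fst G H).comp K.subtype)).mpr fun k hk ↦ ?_,
      fun g ↦ ?_⟩
    · exact Subtype.ext (Prod.ext hk
        (snd_eq_one_of_mem_closure_sup_range_prod hp hN hψ hx hcard hcomm hpow k.2 hk))
    · obtain ⟨k, hk, rfl⟩ := hfst ▸ mem_top g
      exact ⟨⟨k, hk⟩, rfl⟩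
  obtain ⟨f, hf⟩ := Subgroup.exists_eq_graph hbij
  exact ⟨f, fun i ↦ (hf ▸ hxK i : _ ∈ f.graph), fun z ↦ (hf ▸ hψK z : _ ∈ f.graph)⟩

end CentralExtension

namespace IsBilinearForm
variable {G : Type*} [Group G] {Δ : G → G → G} (hΔ : IsBilinearForm Δ)
include hΔ

lemma map_one_left (y : G) : Δ 1 y = 1 := by
  obtain ⟨-, -, -, hmul_left, -⟩ := hΔ
  simpa using hmul_left 1 1 y

lemma map_one_right (x : G) : Δ x 1 = 1 := by
  obtain ⟨-, -, -, -, hmul_right⟩ := hΔ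
  simpa using hmul_right x 1 1

lemma commute (hZ : commutator G ≤ center G) (x y g : G) : Commute (Δ x y) g :=
  (mem_center_iff.mp (hZ (hΔ.1 x y)) g).symm

lemma circ_assoc (hZ : commutator G ≤ center G) (a b c : G) :
    circ Δ (circ Δ a b) c = circ Δ a (circ Δ b c) := by
  have hc := hΔ.commute hZ
  obtain ⟨hmem, hleft, hright, hmul_left, hmul_right⟩ := hΔ
  calc circ Δ (circ Δ a b) c = a * b * Δ a b * c * (Δ a c * Δ b c) := by
        rw [circ, circ, hleft _ _ _ (hmem a b), hmul_left]
    _ = a * b * c * (Δ a b * Δ a c * Δ b c) := by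
        rw [mul_assoc (a * b), (hc a b c).eq]
        simp only [mul_assoc]
    _ = circ Δ a (circ Δ b c) := by
        rw [circ, circ, hright _ _ _ (hmem b c), hmul_right]
        simp only [mul_assoc]
        rw [(hc b c (Δ a b * Δ a c)).eq]
        simp only [mul_assoc]

lemma circ_one_left (a : G) : circ Δ 1 a = a := by
  rw [circ, hΔ.map_one_left, one_mul, mul_one]

lemma circ_one_right (a : G) : circ Δ a 1 = a := by
  rw [circ, hΔ.map_one_right, mul_one, mul_one]

lemma oinv_circ (hZ : commutator G ≤ center G) (a : G) : circ Δ (oinv Δ a) a = 1 := by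
  have hc := hΔ.commute hZ
  have h1 := hΔ.map_one_left
  obtain ⟨hmem, hleft, -, hmul_left, -⟩ := hΔ
  rw [circ, oinv, hleft _ _ _ (hmem a a), mul_assoc a⁻¹, (hc a a a).eq, ← mul_assoc,
    inv_mul_cancel, one_mul, (hc a a _).eq, ← hmul_left, inv_mul_cancel, h1]

end IsBilinearForm

section DeltaSigma
variable {G : Type*} [Group G] (σ : commutator G →* commutator G)

lemma deltaSigma_mem (a b : G) : deltaSigma σ a b ∈ commutator G :=
  (σ _).2

lemma deltaSigma_eq_one_of_commute {a b : G} (h : Commute a b) : deltaSigma σ a b = 1 := by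
  rw [deltaSigma, show (⟨pcomm a b, _⟩ : commutator G) = 1 from Subtype.ext h.pcomm_eq_one,
    map_one, OneMemClass.coe_one]

lemma deltaSigma_swap (a b : G) : deltaSigma σ b a = (deltaSigma σ a b)⁻¹ := by
  rw [deltaSigma, deltaSigma, ← Subgroup.coe_inv, ← map_inv]
  congr 2
  exact Subtype.ext (pcomm_inv a b).symm

variable (hZ : commutator G ≤ center G)
include hZ

lemma deltaSigma_mul_left (a b c : G) :
    deltaSigma σ (a * b) c = deltaSigma σ a c * deltaSigma σ b c := by
  simp only [deltaSigma, ← Subgroup.coe_mul, ← map_mul]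
  congr 3
  exact pcomm_mul_left hZ a b c

lemma deltaSigma_mul_right (a b c : G) :
    deltaSigma σ a (b * c) = deltaSigma σ a b * deltaSigma σ a c := by
  simp only [deltaSigma, ← Subgroup.coe_mul, ← map_mul]
  congr 3
  exact pcomm_mul_right hZ a b c

lemma isBilinearForm_deltaSigma : IsBilinearForm (deltaSigma σ) := by
  have hcen : ∀ {w} (g : G), w ∈ commutator G → Commute w g := fun g hw ↦
    (mem_center_iff.mp (hZ hw) g).symm
  refine ⟨deltaSigma_mem σ, fun x y w hw ↦ ?_, fun x y w hw ↦ ?_,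
    deltaSigma_mul_left σ hZ, deltaSigma_mul_right σ hZ⟩
  · rw [deltaSigma_mul_left σ hZ, deltaSigma_eq_one_of_commute σ (hcen y hw), mul_one]
  · rw [deltaSigma_mul_right σ hZ, deltaSigma_eq_one_of_commute σ (hcen x hw).symm, mul_one]

end DeltaSigma

/-- `G` with the group law `x ∘ y = x·y·σ([x, y])`. -/
def CircGroup {G : Type*} [Group G] (_σ : commutator G →* commutator G) : Type _ := G

namespace CircGroup
variable {G : Type*} [Group G] (σ : commutator G →* commutator G)

def toCirc : G ≃ CircGroup σ := Equiv.refl G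

instance [Finite G] : Finite (CircGroup σ) := inferInstanceAs (Finite G)

variable [hZ : Fact (commutator G ≤ center G)]

instance : Group (CircGroup σ) where
  mul a b := toCirc σ (circ (deltaSigma σ) ((toCirc σ).symm a) ((toCirc σ).symm b))
  one := toCirc σ 1
  inv a := toCirc σ (oinv (deltaSigma σ) ((toCirc σ).symm a))
  mul_assoc := (isBilinearForm_deltaSigma σ hZ.out).circ_assoc hZ.out
  one_mul := (isBilinearForm_deltaSigma σ hZ.out).circ_one_left
  mul_one := (isBilinearForm_deltaSigma σ hZ.out).circ_one_right
  inv_mul_cancel := (isBilinearForm_deltaSigma σ hZ.out).oinv_circ hZ.out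

lemma toCirc_mul_toCirc (a b : G) :
    toCirc σ a * toCirc σ b = toCirc σ (circ (deltaSigma σ) a b) := rfl

lemma toCirc_mul_toCirc_of_commute {a b : G} (h : Commute a b) :
    toCirc σ a * toCirc σ b = toCirc σ (a * b) := by
  rw [toCirc_mul_toCirc, circ, deltaSigma_eq_one_of_commute σ h, mul_one]

lemma toCirc_pow (a : G) (k : ℕ) : toCirc σ (a ^ k) = toCirc σ a ^ k := by
  induction k with
  | zero => rw [pow_zero, pow_zero]; rfl
  | succ k ih =>
    rw [pow_succ, pow_succ, ← ih, toCirc_mul_toCirc_of_commute σ ((Commute.refl a).pow_left k)]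

lemma toCirc_mem_center {z : G} (hz : z ∈ commutator G) : toCirc σ z ∈ center (CircGroup σ) := by
  have hcen := mem_center_iff.mp (hZ.out hz)
  refine mem_center_iff.mpr fun g ↦ ?_
  rw [← (toCirc σ).apply_symm_apply g, toCirc_mul_toCirc_of_commute σ (hcen _),
    toCirc_mul_toCirc_of_commute σ (hcen _).symm, hcen]

def ofCommutator : commutator G →* CircGroup σ where
  toFun z := toCirc σ z
  map_one' := rfl
  map_mul' z w := (toCirc_mul_toCirc_of_commute σ
    (show Commute (z : G) w from (mem_center_iff.mp (hZ.out z.2) w).symm)).symm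

lemma ofCommutator_apply (z : commutator G) : ofCommutator σ z = toCirc σ z := rfl

def mkQuotient : CircGroup σ →* G ⧸ commutator G :=
  MonoidHom.mk' (fun a ↦ ((toCirc σ).symm a : G ⧸ commutator G)) fun a b ↦ by
    change ((circ (deltaSigma σ) _ _ : G) : G ⧸ commutator G) = _
    rw [circ, QuotientGroup.mk_mul, (QuotientGroup.eq_one_iff _).mpr (deltaSigma_mem σ _ _),
      mul_one, QuotientGroup.mk_mul]

lemma mkQuotient_toCirc (a : G) : mkQuotient σ (toCirc σ a) = (a : G ⧸ commutator G) := rfl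

lemma pcomm_toCirc (a b : G) :
    pcomm (toCirc σ a) (toCirc σ b) = toCirc σ (pcomm a b * deltaSigma σ a b ^ 2) := by
  set d := deltaSigma σ a b
  have hd : ∀ g, Commute d g := fun g ↦ (mem_center_iff.mp (hZ.out (deltaSigma_mem σ a b)) g).symm
  have hz : pcomm a b * d ^ 2 ∈ commutator G :=
    mul_mem (pcomm_mem_commutator a b) (pow_mem (deltaSigma_mem σ a b) 2)
  refine pcomm_eq_of_mul_eq ?_
  rw [toCirc_mul_toCirc, toCirc_mul_toCirc, toCirc_mul_toCirc_of_commute σ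
    (mem_center_iff.mp (hZ.out hz) _), circ, circ, deltaSigma_swap σ a b]
  congr 1
  calc a * b * d = b * a * pcomm a b * d := by simp only [pcomm]; group
    _ = b * a * (pcomm a b * d⁻¹ * d ^ 2) := by group
    _ = b * a * (d⁻¹ * pcomm a b * d ^ 2) := by rw [(hd _).inv_left.eq]
    _ = b * a * d⁻¹ * (pcomm a b * d ^ 2) := by group

variable {σ}

lemma pcomm_toCirc_eq_tau {τ : commutator G ≃* commutator G} (hτ : ∀ z, τ z = z * σ z ^ 2)
    (a b : G) :
    pcomm (toCirc σ a) (toCirc σ b) = toCirc σ (τ ⟨pcomm a b, pcomm_mem_commutator a b⟩) := by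
  rw [pcomm_toCirc, hτ]
  rfl

lemma ofCommutator_injective : Function.Injective (ofCommutator σ) :=
  fun _ _ h ↦ Subtype.ext ((toCirc σ).injective h)

def homOfMapMul (θ : G → G) (hθ : ∀ a b, θ (a * b) = circ (deltaSigma σ) (θ a) (θ b)) :
    G →* CircGroup σ :=
  MonoidHom.mk' (toCirc σ ∘ θ) hθ

end CircGroup

section Criterion
open CircGroup
open scoped commutatorElement
variable {G : Type*} [Group G] [Fact (commutator G ≤ center G)]
  {σ : commutator G →* commutator G} {τ : commutator G ≃* commutator G}
  {α : (G ⧸ commutator G) ≃* (G ⧸ commutator G)} {αhat : commutator G ≃* commutator G}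
  (hτ : ∀ z, τ z = z * σ z ^ 2)
  (hαhat : ∀ a b u v : G, (u : G ⧸ commutator G) = α a → (v : G ⧸ commutator G) = α b →
    αhat ⟨pcomm a b, pcomm_mem_commutator a b⟩ = ⟨pcomm u v, pcomm_mem_commutator u v⟩)
include hτ hαhat

lemma map_eq_tau_alphaHat {f : G →* CircGroup σ} (hf : ∀ a, mkQuotient σ (f a) = α a)
    (z : commutator G) : f z = ofCommutator σ (τ (αhat z)) := by
  set E := MonoidHom.eqLocus (f.comp (commutator G).subtype)
    ((ofCommutator σ).comp (τ.toMonoidHom.comp αhat.toMonoidHom))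
  have hE : commutator G ≤ E.map (commutator G).subtype := by
    conv_lhs => rw [commutator_eq_closure]
    rw [closure_le]
    rintro _ ⟨a, b, rfl⟩
    have hab : ⁅a, b⁆ = pcomm a⁻¹ b⁻¹ := by rw [commutatorElement_def, pcomm, inv_inv, inv_inv]
    refine ⟨⟨_, pcomm_mem_commutator a⁻¹ b⁻¹⟩, ?_, hab.symm⟩
    change f (pcomm a⁻¹ b⁻¹) = toCirc σ (τ (αhat _))
    rw [map_pcomm, ← (toCirc σ).apply_symm_apply (f a⁻¹), ← (toCirc σ).apply_symm_apply (f b⁻¹),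
      pcomm_toCirc_eq_tau hτ, hαhat _ _ _ _ (hf a⁻¹) (hf b⁻¹)]
  obtain ⟨w, hw, hwz⟩ := hE z.2
  exact (Subtype.ext hwz : w = z) ▸ hw

lemma injective_of_mkQuotient_eq {f : G →* CircGroup σ} (hf : ∀ a, mkQuotient σ (f a) = α a) :
    Function.Injective f := by
  refine (injective_iff_map_eq_one f).mpr fun a ha ↦ ?_
  have ha' : a ∈ commutator G := by
    rw [← QuotientGroup.eq_one_iff, ← map_eq_one_iff α α.injective, ← hf, ha, map_one]
  have h := map_eq_tau_alphaHat hτ hαhat hf ⟨a, ha'⟩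
  rw [ha, eq_comm, map_eq_one_iff _ ofCommutator_injective, map_eq_one_iff _ τ.injective,
    map_eq_one_iff _ αhat.injective] at h
  exact congrArg Subtype.val h

lemma alphaHat_pi_alpha_symm_eq_of_hom {p : ℕ} {π : (G ⧸ commutator G) →* commutator G}
    (hπ : ∀ g : G, (π g : G) = g ^ p) {f : G →* CircGroup σ}
    (hf : ∀ a, mkQuotient σ (f a) = α a) (w : G ⧸ commutator G) :
    αhat (π (α.symm w)) = τ.symm (π w) := by
  obtain ⟨g, hg⟩ := QuotientGroup.mk_surjective (α.symm w)
  have hαg : α g = w := by rw [hg, MulEquiv.apply_symm_apply]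
  rw [MulEquiv.eq_symm_apply, ← hg]
  apply ofCommutator_injective (σ := σ)
  calc ofCommutator σ (τ (αhat (π g))) = f (g ^ p) := by
        rw [← map_eq_tau_alphaHat hτ hαhat hf, hπ]
    _ = toCirc σ ((toCirc σ).symm (f g) ^ p) := by rw [map_pow, toCirc_pow, Equiv.apply_symm_apply]
    _ = ofCommutator σ (π w) := by rw [← hπ, ← hαg, ← hf g]; rfl

lemma exists_hom_of_alphaHat_pi_alpha_symm_eq [Finite G] {n p : ℕ} (hp : p ≠ 0) {x : Fin n → G}
    (hx : closure (Set.range x) = ⊤) (hcard : Nat.card (G ⧸ commutator G) = p ^ n)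
    {π : (G ⧸ commutator G) →* commutator G} (hπ : ∀ g : G, (π g : G) = g ^ p)
    (hcond : ∀ w, αhat (π (α.symm w)) = τ.symm (π w)) :
    ∃ f : G →* CircGroup σ, ∀ a, mkQuotient σ (f a) = α a := by
  have hτπ : ∀ w, τ (αhat (π w)) = π (α w) := fun w ↦
    (MulEquiv.eq_symm_apply τ).mp (by simpa using hcond (α w))
  choose y hy using fun i ↦ QuotientGroup.mk_surjective (α (x i))
  obtain ⟨f, hfx, -⟩ := exists_monoidHom_extend (y := fun i ↦ toCirc σ (y i))
    (ψ := (ofCommutator σ).comp (τ.toMonoidHom.comp αhat.toMonoidHom)) hp Fact.out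
    (fun z ↦ toCirc_mem_center σ (τ _).2) hx (by rwa [Fintype.card_fin])
    (fun i j ↦ ⟨⟨_, pcomm_mem_commutator _ _⟩, rfl, by
      simp [ofCommutator_apply, hαhat _ _ _ _ (hy i) (hy j), pcomm_toCirc_eq_tau hτ]⟩)
    (fun i ↦ ⟨π (x i), hπ (x i), by simp [ofCommutator_apply, hτπ, ← hy, hπ, toCirc_pow]⟩)
  refine ⟨f, fun a ↦ DFunLike.congr_fun (?_ : (mkQuotient σ).comp f =
    α.toMonoidHom.comp (QuotientGroup.mk' (commutator G))) a⟩
  refine MonoidHom.eq_of_eqOn_dense hx ?_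
  rintro _ ⟨i, rfl⟩
  simp [hfx, mkQuotient_toCirc, hy]

end Criterion

theorem stmt_19_general {p n : ℕ} (hp : p.Prime)
    {G : Type*} [Group G] [Fintype G]
    (hGZ : commutator G = Subgroup.center G)
    (x : Fin n → G) (hgen : Subgroup.closure (Set.range x) = ⊤)
    -- `G/G'` is elementary abelian of order `p^n`, with the images of the `xᵢ` as basis
    (hQcard : Nat.card (G ⧸ commutator G) = p ^ n)
    -- `π : G/G' → G'` is the homomorphism induced by `x ↦ x^p`
    (π : (G ⧸ commutator G) →* ↥(commutator G))
    (hπ : ∀ g : G, (π ((g : G ⧸ commutator G)) : G) = g ^ p)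
    -- `σ` is an endomorphism of `G'` such that `τ : z ↦ z·σ(z)²` is an automorphism
    (σ : ↥(commutator G) →* ↥(commutator G))
    (τ : ↥(commutator G) ≃* ↥(commutator G)) (hτ : ∀ z, τ z = z * σ z ^ 2)
    -- `α` is an automorphism of `G/G'` and `α̂` the induced automorphism of `G'`
    (α : (G ⧸ commutator G) ≃* (G ⧸ commutator G))
    (αhat : ↥(commutator G) ≃* ↥(commutator G))
    (hαhat : ∀ a b u v : G,
      ((u : G ⧸ commutator G)) = α ((a : G ⧸ commutator G)) →
      ((v : G ⧸ commutator G)) = α ((b : G ⧸ commutator G)) →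
      αhat ⟨pcomm a b, pcomm_mem_commutator a b⟩ = ⟨pcomm u v, pcomm_mem_commutator u v⟩) :
    -- the two conditions are equivalent …
    ((∃ θ : G → G, Function.Bijective θ ∧
        (∀ a b : G, θ (a * b) = circ (deltaSigma σ) (θ a) (θ b)) ∧
        (∀ a : G, ((θ a : G ⧸ commutator G)) = α ((a : G ⧸ commutator G)))) ↔
      (∀ w : G ⧸ commutator G, αhat (π (α.symm w)) = τ.symm (π w))) ∧
    -- … and any such `θ` acts on `G'` as `τ ∘ α̂`
    (∀ θ : G → G, Function.Bijective θ →
      (∀ a b : G, θ (a * b) = circ (deltaSigma σ) (θ a) (θ b)) →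
      (∀ a : G, ((θ a : G ⧸ commutator G)) = α ((a : G ⧸ commutator G))) →
      ∀ z : ↥(commutator G), θ ↑z = ↑(τ (αhat z))) := by
  have : Fact (commutator G ≤ Subgroup.center G) := ⟨hGZ.le⟩
  refine ⟨⟨fun ⟨θ, _, hθ, hθα⟩ ↦ ?_, fun hcond ↦ ?_⟩, fun θ _ hθ hθα ↦ ?_⟩
  · exact alphaHat_pi_alpha_symm_eq_of_hom hτ hαhat hπ (f := CircGroup.homOfMapMul θ hθ) hθα
  · obtain ⟨f, hf⟩ :=
      exists_hom_of_alphaHat_pi_alpha_symm_eq hτ hαhat hp.ne_zero hgen hQcard hπ hcond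
    have hinj := (CircGroup.toCirc σ).symm.injective.comp (injective_of_mkQuotient_eq hτ hαhat hf)
    exact ⟨(CircGroup.toCirc σ).symm ∘ f, Finite.injective_iff_bijective.mp hinj, map_mul f, hf⟩
  · exact map_eq_tau_alphaHat hτ hαhat (f := CircGroup.homOfMapMul θ hθ) hθα

/-- the linear criterion for the existence of an isomorphism
`θ : G → (G, ∘_σ)` inducing a prescribed automorphism `α` on `G/G'`. -/
theorem stmt_19 {p n : ℕ} (hp : p.Prime) (hodd : Odd p) (hn : 2 ≤ n)
    {G : Type*} [Group G] [Fintype G] (hpG : IsPGroup p G)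
    (hc2 : Subgroup.lowerCentralSeries (⊤ : Subgroup G) 2 = ⊥) (hc1 : Subgroup.lowerCentralSeries (⊤ : Subgroup G) 1 ≠ ⊥)
    (hGZ : commutator G = Subgroup.center G) (hGF : commutator G = frattini G)
    (x : Fin n → G) (hgen : Subgroup.closure (Set.range x) = ⊤)
    -- `G/G'` is elementary abelian of order `p^n`, with the images of the `xᵢ` as basis
    (hQcard : Nat.card (G ⧸ commutator G) = p ^ n)
    (hQexp : ∀ g : G, ((g : G ⧸ commutator G)) ^ p = 1)
    (hQbasis : ∀ q : G ⧸ commutator G, ∃! e : Fin n → ZMod p,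
      q = (((List.finRange n).map
        (fun i => ((x i : G ⧸ commutator G)) ^ (e i).val)).prod))
    -- `G'` is elementary abelian of order `p^{n(n-1)/2}`, with the `[x_j, x_k]` as basis
    (hDcard : Nat.card ↥(commutator G) = p ^ (n * (n - 1) / 2))
    (hDexp : ∀ g ∈ commutator G, g ^ p = 1)
    (hDbasis : ∀ g ∈ commutator G,
      ∃! e : {q : Fin n × Fin n // q.1 < q.2} → ZMod p,
        g = (((Finset.univ : Finset {q : Fin n × Fin n // q.1 < q.2}).toList.map
          (fun q => (pcomm (x q.1.1) (x q.1.2)) ^ (e q).val)).prod))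
    -- `π : G/G' → G'` is the homomorphism induced by `x ↦ x^p`
    (π : (G ⧸ commutator G) →* ↥(commutator G))
    (hπ : ∀ g : G, (π ((g : G ⧸ commutator G)) : G) = g ^ p)
    -- `σ` is an endomorphism of `G'` such that `τ : z ↦ z·σ(z)²` is an automorphism
    (σ : ↥(commutator G) →* ↥(commutator G))
    (τ : ↥(commutator G) ≃* ↥(commutator G)) (hτ : ∀ z, τ z = z * σ z ^ 2)
    -- `α` is an automorphism of `G/G'` and `α̂` the induced automorphism of `G'`
    (α : (G ⧸ commutator G) ≃* (G ⧸ commutator G))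
    (αhat : ↥(commutator G) ≃* ↥(commutator G))
    (hαhat : ∀ a b u v : G,
      ((u : G ⧸ commutator G)) = α ((a : G ⧸ commutator G)) →
      ((v : G ⧸ commutator G)) = α ((b : G ⧸ commutator G)) →
      αhat ⟨pcomm a b, pcomm_mem_commutator a b⟩ = ⟨pcomm u v, pcomm_mem_commutator u v⟩) :
    -- the two conditions are equivalent …
    ((∃ θ : G → G, Function.Bijective θ ∧
        (∀ a b : G, θ (a * b) = circ (deltaSigma σ) (θ a) (θ b)) ∧
        (∀ a : G, ((θ a : G ⧸ commutator G)) = α ((a : G ⧸ commutator G)))) ↔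
      (∀ w : G ⧸ commutator G, αhat (π (α.symm w)) = τ.symm (π w))) ∧
    -- … and any such `θ` acts on `G'` as `τ ∘ α̂`
    (∀ θ : G → G, Function.Bijective θ →
      (∀ a b : G, θ (a * b) = circ (deltaSigma σ) (θ a) (θ b)) →
      (∀ a : G, ((θ a : G ⧸ commutator G)) = α ((a : G ⧸ commutator G))) →
      ∀ z : ↥(commutator G), θ ↑z = ↑(τ (αhat z))) :=
  stmt_19_general hp hGZ x hgen hQcard π hπ σ τ hτ α αhat hαhat
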